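/- arXiv:2111.09196 — 2 statements merged into one kernel-verified Lean document; each statement's English description precedes it below -/
import Mathlib

section
/- The counting measure on $\mathbb{N}$ (vertices $\{1,2,3,\dots\}$ with distance $|m-n|$) has doubling constant $3$, and $C_{\mathbb{N}} = C^0_{\mathbb{N}} = 3$: the infimum over all positive weight functions $\mu$ of $\sup_{j,k} \mu(B(j,2k+1))/\mu(B(j,k))$ is $3$, and likewise for the radius-1 version. -/
/-
For the counting measure, `#B(j, 2k+1) ≤ 3 · #B(j, k)`, with equality for `j = 2`, `k = 0`.
Conversely, if a positive weight had `μ(j-1) + μ(j) + μ(j+1) ≤ S μ(j)` for all `j ≥ 2` with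
`S < 3`, then the ratios `r_j = μ(j+1)/μ(j)` would satisfy `r_{j+1} ≤ S - 1 - 1/r_j ≤ r_j - (3 - S)`
(as `r + 1/r ≥ 2`), so they would decrease linearly and eventually become negative.
-/

open Finset

/-- The closed ball of center `j` and radius `k` in `ℕ = {1,2,…}` (infinite path graph). -/
def nball (j k : ℕ) : Finset ℕ := Finset.Icc (max 1 (j - k)) (j + k)

/-- The set of doubling quotients of a weight `μ` on `ℕ = {1,2,…}`. -/
def ratioSet (μ : ℕ → ℝ) : Set ℝ :=
  {x | ∃ j : ℕ, 1 ≤ j ∧ ∃ k : ℕ,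
    x = (∑ i ∈ nball j (2 * k + 1), μ i) / (∑ i ∈ nball j k, μ i)}

/-- The set of radius-one doubling quotients of a weight `μ` on `ℕ = {1,2,…}`. -/
def ratio0Set (μ : ℕ → ℝ) : Set ℝ :=
  {x | ∃ j : ℕ, 1 ≤ j ∧ x = (∑ i ∈ nball j 1, μ i) / μ j}

lemma card_nball (j k : ℕ) : #(nball j k) = j + k + 1 - max 1 (j - k) := by
  simp [nball]

lemma nball_zero {j : ℕ} (hj : 1 ≤ j) : nball j 0 = {j} := by
  simp [nball, max_eq_right hj]

lemma nball_one_eq (m : ℕ) : nball (m + 2) 1 = {m + 1, m + 2, m + 3} := by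
  ext i
  simp only [nball, mem_Icc, mem_insert, mem_singleton]
  omega

lemma ratio0Set_subset_ratioSet (μ : ℕ → ℝ) : ratio0Set μ ⊆ ratioSet μ := by
  rintro x ⟨j, hj, rfl⟩
  exact ⟨j, hj, 0, by rw [nball_zero hj, sum_singleton]⟩

lemma three_mem_ratio0Set_one : (3 : ℝ) ∈ ratio0Set fun _ => 1 :=
  ⟨2, by norm_num, by simp [card_nball]⟩

lemma ratioSet_one_le_three {x : ℝ} (hx : x ∈ ratioSet fun _ => 1) : x ≤ 3 := by
  obtain ⟨j, hj, k, rfl⟩ := hx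
  simp only [sum_const, nsmul_eq_mul, mul_one]
  have hpos : 0 < #(nball j k) := by rw [card_nball]; omega
  have hle : #(nball j (2 * k + 1)) ≤ 3 * #(nball j k) := by simp only [card_nball]; omega
  rw [div_le_iff₀ (by exact_mod_cast hpos)]
  exact_mod_cast hle

lemma isGreatest_ratioSet_one : IsGreatest (ratioSet fun _ => 1) 3 :=
  ⟨ratio0Set_subset_ratioSet _ three_mem_ratio0Set_one, fun _ => ratioSet_one_le_three⟩

lemma isGreatest_ratio0Set_one : IsGreatest (ratio0Set fun _ => 1) 3 :=
  ⟨three_mem_ratio0Set_one, fun _ hx => ratioSet_one_le_three (ratio0Set_subset_ratioSet _ hx)⟩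

section ThreeTerm

variable {a : ℕ → ℝ} {S : ℝ}

lemma div_succ_succ_le_div_succ_sub (ha : ∀ n, 0 < a n)
    (h : ∀ n, a n + a (n + 1) + a (n + 2) ≤ S * a (n + 1)) (n : ℕ) :
    a (n + 2) / a (n + 1) ≤ a (n + 1) / a n - (3 - S) := by
  have h0 := ha n
  have h1 := ha (n + 1)
  rw [div_le_iff₀ h1, sub_mul, div_mul_eq_mul_div, le_sub_iff_add_le,
    le_div_iff₀ h0]
  -- `(a (n+1) - a n)² ≥ 0` is `r + 1/r ≥ 2` with denominators cleared
  nlinarith [h n, sq_nonneg (a (n + 1) - a n)]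

lemma three_le_of_forall_add_add_le_mul (ha : ∀ n, 0 < a n)
    (h : ∀ n, a n + a (n + 1) + a (n + 2) ≤ S * a (n + 1)) : 3 ≤ S := by
  by_contra! hS
  have hdesc : ∀ n : ℕ, a (n + 1) / a n ≤ a 1 / a 0 - n * (3 - S) := by
    intro n
    induction n with
    | zero => simp
    | succ n ih =>
      have := div_succ_succ_le_div_succ_sub ha h n
      push_cast
      linarith
  obtain ⟨n, hn⟩ := exists_nat_gt (a 1 / a 0 / (3 - S))
  rw [div_lt_iff₀ (sub_pos.mpr hS)] at hn
  linarith [hdesc n, div_pos (ha (n + 1)) (ha n)]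

end ThreeTerm

lemma three_le_sSup_ratio0Set {μ : ℕ → ℝ} (hμ : ∀ j, 1 ≤ j → 0 < μ j)
    (hb : BddAbove (ratio0Set μ)) : 3 ≤ sSup (ratio0Set μ) := by
  refine three_le_of_forall_add_add_le_mul (a := fun n => μ (n + 1))
    (fun n => hμ (n + 1) n.succ_pos) fun n => ?_
  have hmem : (∑ i ∈ nball (n + 2) 1, μ i) / μ (n + 2) ∈ ratio0Set μ := ⟨n + 2, by omega, rfl⟩
  have hle := le_csSup hb hmem
  rw [nball_one_eq, sum_insert (by simp), sum_insert (by simp), sum_singleton,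
    div_le_iff₀ (hμ (n + 2) (by omega))] at hle
  linarith

lemma three_le_sSup_ratioSet {μ : ℕ → ℝ} (hμ : ∀ j, 1 ≤ j → 0 < μ j)
    (hb : BddAbove (ratioSet μ)) : 3 ≤ sSup (ratioSet μ) :=
  (three_le_sSup_ratio0Set hμ (hb.mono (ratio0Set_subset_ratioSet μ))).trans
    (csSup_le_csSup hb ⟨_, 1, le_rfl, rfl⟩ (ratio0Set_subset_ratioSet μ))

/-- The counting measure on `ℕ = {1,2,…}` has doubling constant `3`, and
`C_ℕ = C⁰_ℕ = 3`. -/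
theorem stmt_10 :
    sSup (ratioSet fun _ => (1 : ℝ)) = 3 ∧
    sInf {c | ∃ μ : ℕ → ℝ, (∀ j, 1 ≤ j → 0 < μ j) ∧ BddAbove (ratioSet μ) ∧
      c = sSup (ratioSet μ)} = 3 ∧
    sInf {c | ∃ μ : ℕ → ℝ, (∀ j, 1 ≤ j → 0 < μ j) ∧ BddAbove (ratioSet μ) ∧
      c = sSup (ratio0Set μ)} = 3 := by
  have hone : ∀ j, 1 ≤ j → (0 : ℝ) < (fun _ => 1) j := fun _ _ => one_pos
  refine ⟨isGreatest_ratioSet_one.csSup_eq, IsLeast.csInf_eq ⟨?_, ?_⟩, IsLeast.csInf_eq ⟨?_, ?_⟩⟩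
  · exact ⟨_, hone, isGreatest_ratioSet_one.bddAbove, isGreatest_ratioSet_one.csSup_eq.symm⟩
  · rintro _ ⟨μ, hμ, hb, rfl⟩
    exact three_le_sSup_ratioSet hμ hb
  · exact ⟨_, hone, isGreatest_ratioSet_one.bddAbove, isGreatest_ratio0Set_one.csSup_eq.symm⟩
  · rintro _ ⟨μ, hμ, hb, rfl⟩
    exact three_le_sSup_ratio0Set hμ (hb.mono (ratio0Set_subset_ratioSet μ))
end

section
/- For every $\alpha \in [1/2, 1]$, the measure $\lambda_\alpha$ on $\mathbb{N} = \{1,2,\dots\}$ given by $\lambda_\alpha(1) = \alpha$ and $\lambda_\alpha(j) = 1$ for $j > 1$ satisfies $C_{\lambda_\alpha} = 3$; in particular, $\lambda_\alpha$ is a doubling minimizer on $\mathbb{N}$. -/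
open Finset

/-- For `α ∈ [1/2, 1]`, the measure `λ_α` on `ℕ = {1,2,…}` with `λ_α(1) = α` and
`λ_α(j) = 1` for `j > 1` satisfies `C_{λ_α} = 3`; in particular it is a doubling
minimizer on `ℕ` (since `C_ℕ = 3`). -/
theorem stmt_14 (α : ℝ) (hα : α ∈ Set.Icc (1 / 2 : ℝ) 1) :
    sSup (ratioSet fun j => if j = 1 then α else 1) = 3 := by
  obtain ⟨hα1, hα2⟩ := hα
  set μ : ℕ → ℝ := fun j => if j = 1 then α else 1 with hμ
  have hαpos : (0:ℝ) < α := by linarith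
  have S1 : ∀ a b : ℕ, 2 ≤ a → ∑ i ∈ Finset.Icc a b, μ i = ((Finset.Icc a b).card : ℝ) := by
    intro a b ha
    rw [Finset.card_eq_sum_ones, Nat.cast_sum]
    refine Finset.sum_congr rfl fun i hi => ?_
    have h1 : i ≠ 1 := by have := (Finset.mem_Icc.mp hi).1; omega
    simp [hμ, h1]
  have S2 : ∀ b : ℕ, 1 ≤ b → ∑ i ∈ Finset.Icc 1 b, μ i = α + ((b - 1 : ℕ) : ℝ) := by
    intro b hb
    have hins : Finset.Icc 1 b = insert 1 (Finset.Icc 2 b) := by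
      ext i; simp only [Finset.mem_Icc, Finset.mem_insert]; omega
    rw [hins, Finset.sum_insert (by simp), S1 2 b le_rfl]
    simp [hμ, Nat.card_Icc]
  have hμle : ∀ i, μ i ≤ 1 := by
    intro i; by_cases h : i = 1 <;> simp [hμ, h, hα2]
  apply IsGreatest.csSup_eq
  constructor
  · refine ⟨3, by norm_num, 0, ?_⟩
    have h1 : nball 3 (2 * 0 + 1) = Finset.Icc 2 4 := by
      simp [nball]
    have h2 : nball 3 0 = Finset.Icc 3 3 := by
      simp [nball]
    rw [h1, h2, S1 2 4 le_rfl, S1 3 3 (by norm_num)]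
    norm_num
  · rintro x ⟨j, hj, k, rfl⟩
    by_cases h : j ≤ k + 1
    · -- balls touch 1
      have hd : nball j k = Finset.Icc 1 (j + k) := by
        unfold nball; congr 1; omega
      have hn : nball j (2 * k + 1) = Finset.Icc 1 (j + (2 * k + 1)) := by
        unfold nball; congr 1; omega
      rw [hd, hn, S2 _ (by omega), S2 _ (by omega)]
      rw [div_le_iff₀ (by
        have : (0:ℝ) ≤ ((j + k - 1 : ℕ) : ℝ) := Nat.cast_nonneg _
        linarith)]
      have c1 : ((j + (2 * k + 1) - 1 : ℕ) : ℝ) = (j : ℝ) + 2 * k := by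
        have : j + (2 * k + 1) - 1 = j + 2 * k := by omega
        rw [this]; push_cast; ring
      have c2 : ((j + k - 1 : ℕ) : ℝ) = (j : ℝ) + k - 1 := by
        have : (j + k - 1) + 1 = j + k := by omega
        have := congrArg (fun n : ℕ => (n : ℝ)) this
        push_cast at this; linarith
      rw [c1, c2]
      have hjr : (1:ℝ) ≤ (j:ℝ) := by exact_mod_cast hj
      nlinarith [Nat.cast_nonneg (α := ℝ) k]
    · -- denominator ball avoids 1
      push_neg at h
      have hd : nball j k = Finset.Icc (j - k) (j + k) := by
        unfold nball; congr 1; omega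
      have hden : ∑ i ∈ nball j k, μ i = ((2 * k + 1 : ℕ) : ℝ) := by
        rw [hd, S1 (j - k) (j + k) (by omega)]
        congr 1
        rw [Nat.card_Icc]; omega
      have hnum : ∑ i ∈ nball j (2 * k + 1), μ i ≤ ((4 * k + 3 : ℕ) : ℝ) := by
        calc ∑ i ∈ nball j (2 * k + 1), μ i
            ≤ ∑ _i ∈ nball j (2 * k + 1), (1:ℝ) :=
              Finset.sum_le_sum fun i _ => hμle i
          _ = ((nball j (2 * k + 1)).card : ℝ) := by simp
          _ ≤ ((4 * k + 3 : ℕ) : ℝ) := by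
              have hcard : (nball j (2 * k + 1)).card ≤ 4 * k + 3 := by
                unfold nball
                rw [Nat.card_Icc]
                rcases le_or_gt (j - (2 * k + 1)) 1 with hc | hc
                · rw [max_eq_left hc]; omega
                · rw [max_eq_right hc.le]; omega
              exact_mod_cast hcard
      rw [hden, div_le_iff₀ (by positivity)]
      calc ∑ i ∈ nball j (2 * k + 1), μ i ≤ ((4 * k + 3 : ℕ) : ℝ) := hnum
        _ ≤ 3 * ((2 * k + 1 : ℕ) : ℝ) := by push_cast; linarith [Nat.cast_nonneg (α := ℝ) k]
end
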